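/- arXiv:2511.03526 — 4 statements merged into one kernel-verified Lean document; each statement's English description precedes it below -/
import Mathlib

section
/- Let F be a finite field and let d be an integer with 2 ≤ d ≤ |F| + 1; if d = 2, assume further that |F| is not congruent to 3 modulo 4. Then there exists a subset C₀ ⊆ F^d with |C₀| = |F| + 1 − d such that every affine hyperplane of F^d contains at most d points of C₀ and every Q-quadric in F^d for Q = X₁² + ⋯ + X_d² contains at most d+1 points of C₀ (i.e. C₀ is Q-generic for Q = X₁² + ⋯ + X_d²). -/
/-!
The set is a piece `{(p₁(t)/t, …, p_d(t)/t) : t ∈ W}`, `W ⊆ Fˣ`, of a rational curve, where the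
polynomials `p₁, …, p_d` have degree `≤ d` and together with `t` form a basis of the polynomials
of degree `≤ d`. Clearing denominators, the point with parameter `t` lies on the hyperplane
`c₀ + ∑ cᵢxᵢ = 0` iff `t` is a root of `c₀t + ∑ cᵢpᵢ`, a nonzero polynomial of degree `≤ d`, and
on the quadric `∑ xᵢ² + c₀ + ∑ cᵢxᵢ = 0` iff `t` is a root of `∑ pᵢ² + c₀t² + t ∑ cᵢpᵢ`, which
has degree `≤ d + 1` and is nonzero as soon as `∑ pᵢ²` has degree `≤ d + 1` and a nonzero constant
term. The curve is injective because `1/t` is an affine function of the point.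

Such polynomials exist. In characteristic 2, `∑ pᵢ² = (∑ pᵢ)²`, so `∑ pᵢ = 1` suffices. For
`d = 2` take `X², iX² + 1` with `i² = -1`. For `d ≥ 3` write `-1 = a² + b²`: the four polynomials
`quadBlock a b f g h k` have sum of squares `-4b²(fg + hk)`, so a block with `fg + hk = 0` raises
`d` by four without changing `∑ pᵢ²`, starting from explicit families for `d = 3, 4, 5, 6`.
-/

/-- A subset `D ⊆ F^d` is `Q`-generic over `F` if every affine hyperplane of `F^d`
contains at most `d` points of `D`, and every `Q`-quadric contains at most `d+1`
points of `D`. -/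
def QGeneric {F : Type*} [Field F] {d : ℕ} (Q : MvPolynomial (Fin d) F)
    (D : Set (Fin d → F)) : Prop :=
  (∀ f : MvPolynomial (Fin d) F, f.totalDegree = 1 →
    {x ∈ D | MvPolynomial.eval x f = 0}.encard ≤ (d : ℕ∞)) ∧
  (∀ f : MvPolynomial (Fin d) F, f.totalDegree ≤ 1 →
    {x ∈ D | MvPolynomial.eval x (Q + f) = 0}.encard ≤ (d : ℕ∞) + 1)

lemma Finsupp.eq_zero_or_eq_single_one_of_sum_le_one {σ : Type*} {m : σ →₀ ℕ}
    (hm : (m.sum fun _ e => e) ≤ 1) : m = 0 ∨ ∃ i, m = single i 1 := by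
  rcases Nat.le_one_iff_eq_zero_or_eq_one.mp hm with h | h
  · exact Or.inl ((degree_eq_zero_iff m).mp h)
  · exact Or.inr ((sum_eq_one_iff m).mp h)

namespace MvPolynomial

variable {σ R : Type*} [CommSemiring R] [Fintype σ]

lemma eq_C_add_sum_C_mul_X_of_totalDegree_le_one {f : MvPolynomial σ R}
    (hf : f.totalDegree ≤ 1) :
    f = C (f.coeff 0) + ∑ i, C (f.coeff (Finsupp.single i 1)) * X i := by
  classical
  ext m
  simp only [coeff_add, coeff_C, coeff_sum, coeff_C_mul, coeff_X]
  by_cases hm : (m.sum fun _ e => e) ≤ 1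
  · rcases Finsupp.eq_zero_or_eq_single_one_of_sum_le_one hm with rfl | ⟨j, rfl⟩
    · simp
    · simp [Finsupp.single_left_inj, eq_comm (a := (0 : σ →₀ ℕ))]
  · have hfm : f.coeff m = 0 := notMem_support_iff.mp fun h =>
      hm ((le_totalDegree h).trans hf)
    have h0 : (0 : σ →₀ ℕ) ≠ m := by rintro rfl; simp at hm
    have h1 : ∀ i, Finsupp.single i 1 ≠ m := by rintro i rfl; simp at hm
    simp [hfm, h0, h1]

lemma exists_coeff_single_one_ne_zero_of_totalDegree_eq_one {f : MvPolynomial σ R}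
    (hf : f.totalDegree = 1) : ∃ i, f.coeff (Finsupp.single i 1) ≠ 0 := by
  by_contra! h
  have hf' := eq_C_add_sum_C_mul_X_of_totalDegree_le_one hf.le
  simp only [h, C_0, zero_mul, Finset.sum_const_zero, add_zero] at hf'
  rw [hf', totalDegree_C] at hf
  exact zero_ne_one hf

lemma eval_eq_of_totalDegree_le_one {f : MvPolynomial σ R} (hf : f.totalDegree ≤ 1)
    (x : σ → R) : eval x f = f.coeff 0 + ∑ i, f.coeff (Finsupp.single i 1) * x i := by
  conv_lhs => rw [eq_C_add_sum_C_mul_X_of_totalDegree_le_one hf]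
  simp

end MvPolynomial

open Polynomial Submodule

lemma Submodule.mem_of_add_mem_of_sub_mem {F M : Type*} [Field F] [AddCommGroup M] [Module F M]
    {S : Submodule F M} (h2 : (2 : F) ≠ 0) {x y : M} (hadd : x + y ∈ S) (hsub : x - y ∈ S) :
    x ∈ S ∧ y ∈ S := by
  have hx : (x + y) + (x - y) = (2 : F) • x := by module
  have hy : (x + y) - (x - y) = (2 : F) • y := by module
  exact ⟨(inv_smul_smul₀ h2 x) ▸ hx ▸ S.smul_mem _ (S.add_mem hadd hsub),
    (inv_smul_smul₀ h2 y) ▸ hy ▸ S.smul_mem _ (S.sub_mem hadd hsub)⟩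

lemma Polynomial.encard_sep_image_le_natDegree {F α : Type*} [Field F] (φ : F → α)
    (W : Finset F) {N : F[X]} (hN : N ≠ 0) {P : α → Prop}
    (h : ∀ t ∈ W, P (φ t) → N.IsRoot t) :
    {x ∈ φ '' W | P x}.encard ≤ N.natDegree := by
  classical
  calc {x ∈ φ '' W | P x}.encard ≤ (φ '' ↑(W.filter N.IsRoot)).encard := by
        refine Set.encard_le_encard ?_
        rintro _ ⟨⟨t, ht, rfl⟩, hP⟩
        exact ⟨t, by simpa using ⟨ht, h t ht hP⟩, rfl⟩
    _ ≤ (W.filter N.IsRoot).card :=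
        (Set.encard_image_le _ _).trans (Set.encard_coe_eq_coe_finsetCard _).le
    _ ≤ N.natDegree := by
        exact_mod_cast card_le_degree_of_subset_roots fun t ht =>
          (mem_roots hN).mpr (Finset.mem_filter.mp ht).2

namespace QGeneric

variable {F : Type*} [Field F]

section Curve

variable {n : ℕ} (p : Fin n → F[X])

def curvePoint (t : F) : Fin n → F := fun i => (p i).eval t / t

lemma inv_eq_add_sum_mul_curvePoint {α : F} {γ : Fin n → F}
    (h : (1 : F[X]) = α • X + ∑ i, γ i • p i) {t : F} (ht : t ≠ 0) :
    t⁻¹ = α + ∑ i, γ i * curvePoint p t i := by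
  have h1 := congrArg (eval t) h
  simp only [eval_one, eval_add, eval_smul, eval_X, eval_finsetSum, smul_eq_mul] at h1
  simp only [curvePoint, mul_div_assoc', ← Finset.sum_div]
  field_simp
  linear_combination h1

lemma injOn_curvePoint (h : (1 : F[X]) ∈ span F (insert X (Set.range p))) :
    Set.InjOn (curvePoint p) {t | t ≠ 0} := by
  obtain ⟨α, z, hz, h⟩ := mem_span_insert.mp h
  obtain ⟨γ, rfl⟩ := (mem_span_range_iff_exists_fun F).mp hz
  have key {t : F} (ht : t ≠ 0) := inv_eq_add_sum_mul_curvePoint p h ht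
  intro s hs t ht hst
  exact inv_injective ((key hs).trans (hst ▸ (key ht).symm))

lemma span_insert_X_range_eq_degreeLT (hn : 1 ≤ n) (hdeg : ∀ i, (p i).natDegree ≤ n)
    (hspan : ∀ k ≤ n, X ^ k ∈ span F (insert X (Set.range p))) :
    span F (insert X (Set.range p)) = degreeLT F (n + 1) := by
  classical
  apply le_antisymm
  · rw [span_le, Set.insert_subset_iff, Set.range_subset_iff]
    refine ⟨mem_degreeLT.mpr ?_, fun i => mem_degreeLT.mpr ?_⟩
    · exact degree_X_le.trans_lt (by exact_mod_cast Nat.lt_succ_of_le hn)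
    · exact (degree_le_natDegree).trans_lt (by exact_mod_cast Nat.lt_succ_of_le (hdeg i))
  · rw [degreeLT_eq_span_X_pow, span_le, Finset.coe_image, Set.image_subset_iff]
    intro k hk
    exact hspan k (Nat.lt_succ_iff.mp (Finset.mem_range.mp hk))

lemma linearIndependent_cons_X (h : span F (insert X (Set.range p)) = degreeLT F (n + 1)) :
    LinearIndependent F (Fin.cons X p : Fin (n + 1) → F[X]) := by
  rw [linearIndependent_iff_card_eq_finrank_span, Fin.range_cons, Set.finrank, h,
    (degreeLTEquiv F (n + 1)).finrank_eq, Module.finrank_fin_fun, Fintype.card_fin]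

lemma eval_curvePoint_mul {f : MvPolynomial (Fin n) F} (hf : f.totalDegree ≤ 1) {t : F}
    (ht : t ≠ 0) :
    MvPolynomial.eval (curvePoint p t) f * t =
      (f.coeff 0 • X + ∑ i, f.coeff (Finsupp.single i 1) • p i).eval t := by
  rw [MvPolynomial.eval_eq_of_totalDegree_le_one hf]
  simp only [curvePoint, eval_add, eval_smul, eval_X, eval_finsetSum, smul_eq_mul,
    mul_div_assoc', ← Finset.sum_div]
  field_simp

lemma eval_curvePoint_mul_sq {f : MvPolynomial (Fin n) F} (hf : f.totalDegree ≤ 1) {t : F}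
    (ht : t ≠ 0) :
    MvPolynomial.eval (curvePoint p t) (∑ i, MvPolynomial.X i ^ 2 + f) * t ^ 2 =
      (∑ i, p i ^ 2 + f.coeff 0 • X ^ 2 +
        X * ∑ i, f.coeff (Finsupp.single i 1) • p i).eval t := by
  rw [map_add, MvPolynomial.eval_eq_of_totalDegree_le_one hf]
  simp only [curvePoint, map_sum, map_pow, MvPolynomial.eval_X, div_pow, eval_add, eval_mul,
    eval_pow, eval_smul, eval_X, eval_finsetSum, smul_eq_mul, mul_div_assoc', ← Finset.sum_div]
  field_simp
  ring

lemma encard_curvePoint_hyperplane_le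
    (hli : LinearIndependent F (Fin.cons X p : Fin (n + 1) → F[X]))
    (hdeg : ∀ i, (p i).natDegree ≤ n) (W : Finset F) (hW : 0 ∉ W)
    {f : MvPolynomial (Fin n) F} (hf : f.totalDegree = 1) :
    {x ∈ curvePoint p '' W | MvPolynomial.eval x f = 0}.encard ≤ n := by
  set N : F[X] := f.coeff 0 • X + ∑ i, f.coeff (Finsupp.single i 1) • p i
  obtain ⟨i, hi⟩ := MvPolynomial.exists_coeff_single_one_ne_zero_of_totalDegree_eq_one hf
  have hN : N ≠ 0 := by
    intro hN
    refine hi (Fintype.linearIndependent_iff.mp hli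
      (Fin.cons (f.coeff 0) fun i => f.coeff (Finsupp.single i 1)) ?_ i.succ)
    simpa [Fin.sum_univ_succ] using hN
  have hNdeg : N.natDegree ≤ n :=
    natDegree_add_le_of_degree_le ((natDegree_smul_le _ _).trans (natDegree_X_le.trans i.pos))
      (natDegree_sum_le_of_forall_le _ _ fun j _ => (natDegree_smul_le _ _).trans (hdeg j))
  refine (encard_sep_image_le_natDegree _ W hN fun t ht hx => ?_).trans
    (by exact_mod_cast hNdeg)
  rw [IsRoot, ← eval_curvePoint_mul p hf.le (ne_of_mem_of_not_mem ht hW), hx, zero_mul]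

lemma encard_curvePoint_quadric_le (hn : 1 ≤ n) (hdeg : ∀ i, (p i).natDegree ≤ n)
    (hS : (∑ i, p i ^ 2).natDegree ≤ n + 1) (hS0 : (∑ i, p i ^ 2).coeff 0 ≠ 0)
    (W : Finset F) (hW : 0 ∉ W) {f : MvPolynomial (Fin n) F} (hf : f.totalDegree ≤ 1) :
    {x ∈ curvePoint p '' W |
      MvPolynomial.eval x (∑ i, MvPolynomial.X i ^ 2 + f) = 0}.encard ≤ n + 1 := by
  set M : F[X] := ∑ i, p i ^ 2 + f.coeff 0 • X ^ 2 +
    X * ∑ i, f.coeff (Finsupp.single i 1) • p i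
  have hM : M ≠ 0 := by
    intro hM
    apply hS0
    simpa [M, coeff_X_pow] using congrArg (coeff · 0) hM
  have hMdeg : M.natDegree ≤ n + 1 := by
    have hlin : (∑ i, f.coeff (Finsupp.single i 1) • p i).natDegree ≤ n :=
      natDegree_sum_le_of_forall_le _ _ fun i _ => (natDegree_smul_le _ _).trans (hdeg i)
    refine natDegree_add_le_of_degree_le (natDegree_add_le_of_degree_le hS
      ((natDegree_smul_le _ _).trans ?_)) (natDegree_mul_le.trans ?_)
    · rw [natDegree_X_pow]; omega
    · have := natDegree_X_le (R := F); omega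
  refine (encard_sep_image_le_natDegree _ W hM fun t ht hx => ?_).trans
    (by exact_mod_cast hMdeg)
  rw [IsRoot, ← eval_curvePoint_mul_sq p hf (ne_of_mem_of_not_mem ht hW), hx, zero_mul]

theorem exists_qGeneric_of_forall_X_pow_mem_span [Fintype F] (hn : 2 ≤ n)
    (hdeg : ∀ i, (p i).natDegree ≤ n)
    (hspan : ∀ k ≤ n, X ^ k ∈ span F (insert X (Set.range p)))
    (hS : (∑ i, p i ^ 2).natDegree ≤ n + 1) (hS0 : (∑ i, p i ^ 2).coeff 0 ≠ 0) :
    ∃ C₀ : Set (Fin n → F), C₀.ncard = Fintype.card F + 1 - n ∧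
      QGeneric (∑ i : Fin n, (MvPolynomial.X i : MvPolynomial (Fin n) F) ^ 2) C₀ := by
  classical
  have hli := linearIndependent_cons_X p
    (span_insert_X_range_eq_degreeLT p (by omega) hdeg hspan)
  have hinj := injOn_curvePoint p (by simpa using hspan 0 (Nat.zero_le n))
  obtain ⟨W, hW, hWcard⟩ := Finset.exists_subset_card_eq (s := Finset.univ.erase (0 : F))
    (n := Fintype.card F + 1 - n) (by
      rw [Finset.card_erase_of_mem (Finset.mem_univ _), Finset.card_univ]
      have := Fintype.card_pos (α := F)
      omega)
  have hW0 : (0 : F) ∉ W := fun h => by simpa using hW h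
  refine ⟨curvePoint p '' W, ?_, fun f hf => ?_, fun f hf => ?_⟩
  · rw [(hinj.mono fun t ht => ne_of_mem_of_not_mem ht hW0).ncard_image,
      Set.ncard_coe_finset, hWcard]
  · exact encard_curvePoint_hyperplane_le p hli hdeg W hW0 hf
  · exact_mod_cast encard_curvePoint_quadric_le p (by omega) hdeg hS hS0 W hW0 hf

end Curve

noncomputable def sumSq (l : List F[X]) : F[X] := (l.map (· ^ 2)).sum

@[simp] lemma sumSq_nil : sumSq ([] : List F[X]) = 0 := rfl

@[simp] lemma sumSq_cons (r : F[X]) (l : List F[X]) : sumSq (r :: l) = r ^ 2 + sumSq l := by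
  simp [sumSq]

@[simp] lemma sumSq_append (l l' : List F[X]) : sumSq (l ++ l') = sumSq l + sumSq l' := by
  simp [sumSq]

structure Admissible (l : List F[X]) : Prop where
  natDegree_le : ∀ r ∈ l, r.natDegree ≤ l.length
  X_pow_mem_span : ∀ k ≤ l.length, X ^ k ∈ span F (insert X {r | r ∈ l})
  natDegree_sumSq_le : (sumSq l).natDegree ≤ l.length + 1
  coeff_zero_sumSq_ne_zero : (sumSq l).coeff 0 ≠ 0

theorem Admissible.exists_qGeneric [Fintype F] {l : List F[X]} (hl : Admissible l)
    (h2 : 2 ≤ l.length) :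
    ∃ C₀ : Set (Fin l.length → F), C₀.ncard = Fintype.card F + 1 - l.length ∧
      QGeneric (∑ i : Fin l.length, (MvPolynomial.X i : MvPolynomial (Fin l.length) F) ^ 2)
        C₀ := by
  have hsum : ∑ i, l.get i ^ 2 = sumSq l := Fin.sum_univ_fun_getElem l (· ^ 2)
  refine exists_qGeneric_of_forall_X_pow_mem_span l.get h2
    (fun i => hl.natDegree_le _ (by simp)) ?_ (hsum ▸ hl.natDegree_sumSq_le)
    (hsum ▸ hl.coeff_zero_sumSq_ne_zero)
  simpa only [Set.range_list_get] using hl.X_pow_mem_span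

lemma neg_four_mul_sq_ne_zero {b : F} (hb : b ≠ 0) (h2 : (2 : F) ≠ 0) : -4 * b ^ 2 ≠ 0 := by
  have h4 : (4 : F) = 2 * 2 := by norm_num
  simp [h4, h2, hb]

section OddChar

variable (a b : F)

/-- The coordinates of `f • u₁ + g • u₂ + h • w₁ + k • w₂` for `u₁ = (1, a, b, 0)`,
`u₂ = (1, a, -b, 0)`, `w₁ = (-a, 1, 0, b)`, `w₂ = (-a, 1, 0, -b)`. When `1 + a² + b² = 0` these
vectors are isotropic, `u₁ ⬝ u₂ = w₁ ⬝ w₂ = -2b²` and `uᵢ ⬝ wⱼ = 0`, whence `sumSq_quadBlock`. -/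
noncomputable def quadBlock (f g h k : F[X]) : List F[X] :=
  [f + g - a • (h + k), a • (f + g) + (h + k), b • (f - g), b • (h - k)]

variable {a b}

lemma sumSq_quadBlock (hab : 1 + a ^ 2 + b ^ 2 = 0) (f g h k : F[X]) :
    sumSq (quadBlock a b f g h k) = (-4 * b ^ 2) • (f * g + h * k) := by
  simp only [quadBlock, sumSq_cons, sumSq_nil, smul_eq_C_mul]
  linear_combination (norm := skip) ((f + g) ^ 2 + (h + k) ^ 2) * congrArg C hab
  simp only [map_add, map_pow, map_one, map_zero, map_mul, map_neg, map_ofNat]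
  ring

lemma mem_of_mem_quadBlock {S : Submodule F F[X]} {f g h k : F[X]} (hf : f ∈ S) (hg : g ∈ S)
    (hh : h ∈ S) (hk : k ∈ S) : ∀ r ∈ quadBlock a b f g h k, r ∈ S := by
  simp only [quadBlock, List.mem_cons, List.not_mem_nil, or_false]
  rintro r (rfl | rfl | rfl | rfl)
  · exact S.sub_mem (S.add_mem hf hg) (S.smul_mem _ (S.add_mem hh hk))
  · exact S.add_mem (S.smul_mem _ (S.add_mem hf hg)) (S.add_mem hh hk)
  · exact S.smul_mem _ (S.sub_mem hf hg)
  · exact S.smul_mem _ (S.sub_mem hh hk)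

lemma subset_span_quadBlock (hab : 1 + a ^ 2 + b ^ 2 = 0) (hb : b ≠ 0) (h2 : (2 : F) ≠ 0)
    (f g h k : F[X]) : {f, g, h, k} ⊆ (span F {r | r ∈ quadBlock a b f g h k} : Set F[X]) := by
  set S := span F {r | r ∈ quadBlock a b f g h k}
  have hq : ∀ r ∈ quadBlock a b f g h k, r ∈ S := fun r hr => subset_span hr
  simp only [quadBlock, List.mem_cons, List.not_mem_nil, or_false, forall_eq_or_imp,
    forall_eq] at hq
  obtain ⟨h1, h2', h3, h4⟩ := hq
  have hb2 : -b ^ 2 ≠ 0 := neg_ne_zero.mpr (pow_ne_zero 2 hb)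
  have e1 : f + g - a • (h + k) + a • (a • (f + g) + (h + k)) = (-b ^ 2) • (f + g) := by
    linear_combination (norm := module) hab • (f + g)
  have e2 : a • (f + g) + (h + k) - a • (f + g - a • (h + k)) = (-b ^ 2) • (h + k) := by
    linear_combination (norm := module) hab • (h + k)
  have hfg := (smul_mem_iff S hb2).mp (e1 ▸ S.add_mem h1 (S.smul_mem a h2'))
  have hhk := (smul_mem_iff S hb2).mp (e2 ▸ S.sub_mem h2' (S.smul_mem a h1))
  obtain ⟨hf, hg⟩ := mem_of_add_mem_of_sub_mem h2 hfg ((smul_mem_iff S hb).mp h3)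
  obtain ⟨hh, hk⟩ := mem_of_add_mem_of_sub_mem h2 hhk ((smul_mem_iff S hb).mp h4)
  simp only [Set.insert_subset_iff, Set.singleton_subset_iff]
  exact ⟨hf, hg, hh, hk⟩

lemma admissible_quadBlock_append (hab : 1 + a ^ 2 + b ^ 2 = 0) (hb : b ≠ 0)
    (h2 : (2 : F) ≠ 0) {f g h k : F[X]} (E : List F[X])
    (hdeg : ∀ r ∈ f :: g :: h :: k :: E, r.natDegree ≤ E.length + 4)
    (hspan : ∀ j ≤ E.length + 4, X ^ j ∈ span F (insert X {r | r ∈ f :: g :: h :: k :: E}))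
    (hS : ((-4 * b ^ 2) • (f * g + h * k) + sumSq E).natDegree ≤ E.length + 5)
    (hS0 : ((-4 * b ^ 2) • (f * g + h * k) + sumSq E).coeff 0 ≠ 0) :
    Admissible (quadBlock a b f g h k ++ E) := by
  have hlen : (quadBlock a b f g h k ++ E).length = E.length + 4 := by
    simp [quadBlock]
  have hsum : sumSq (quadBlock a b f g h k ++ E) =
      (-4 * b ^ 2) • (f * g + h * k) + sumSq E := by
    rw [sumSq_append, sumSq_quadBlock hab]
  refine ⟨fun r hr => ?_, fun j hj => ?_, by rwa [hsum, hlen], by rwa [hsum]⟩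
  · rw [hlen]
    have hdeg' : ∀ r ∈ f :: g :: h :: k :: E, r ∈ degreeLE F ↑(E.length + 4) := fun r hr =>
      mem_degreeLE.mpr (natDegree_le_iff_degree_le.mp (hdeg r hr))
    simp only [List.mem_cons, forall_eq_or_imp] at hdeg'
    obtain ⟨hf, hg, hh, hk, -⟩ := hdeg'
    rcases List.mem_append.mp hr with hr | hr
    · exact natDegree_le_iff_degree_le.mpr (mem_degreeLE.mp (mem_of_mem_quadBlock hf hg hh hk r hr))
    · exact hdeg r (by simp [hr])
  · refine span_le.mpr ?_ (hspan j (hlen ▸ hj))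
    have hQ : span F {r | r ∈ quadBlock a b f g h k} ≤
        span F (insert X {r | r ∈ quadBlock a b f g h k ++ E}) :=
      span_mono fun r hr => Set.mem_insert_of_mem _ (List.mem_append_left _ hr)
    have hfghk := (subset_span_quadBlock hab hb h2 f g h k).trans hQ
    rintro r (rfl | hr)
    · exact subset_span (Set.mem_insert _ _)
    · simp only [Set.mem_ofPred_eq, List.mem_cons] at hr
      rcases hr with rfl | rfl | rfl | rfl | hr
      iterate 4 exact hfghk (by simp)
      exact subset_span (Set.mem_insert_of_mem _ (List.mem_append_right _ hr))

lemma Admissible.quadBlock_append (hab : 1 + a ^ 2 + b ^ 2 = 0) (hb : b ≠ 0)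
    (h2 : (2 : F) ≠ 0) {l : List F[X]} (hl : Admissible l) :
    Admissible (quadBlock a b (X ^ (l.length + 4)) (X ^ (l.length + 1)) (X ^ (l.length + 3))
      (-X ^ (l.length + 2)) ++ l) := by
  set n := l.length
  have hcancel : (X ^ (n + 4) * X ^ (n + 1) + X ^ (n + 3) * -X ^ (n + 2) : F[X]) = 0 := by ring
  refine admissible_quadBlock_append hab hb h2 l ?_ (fun j hj => ?_) ?_ ?_
  · simp only [List.mem_cons, forall_eq_or_imp, natDegree_neg, natDegree_X_pow]
    exact ⟨le_rfl, by omega, by omega, by omega,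
      fun r hr => (hl.natDegree_le r hr).trans (by omega)⟩
  · rcases Nat.lt_or_ge n j with h | h
    · obtain rfl | rfl | rfl | rfl : j = n + 1 ∨ j = n + 2 ∨ j = n + 3 ∨ j = n + 4 := by omega
      · exact subset_span (by simp)
      · rw [← neg_neg (X ^ (n + 2))]
        exact neg_mem (subset_span (by simp))
      · exact subset_span (by simp)
      · exact subset_span (by simp)
    · exact span_mono (Set.insert_subset_insert fun r (hr : r ∈ l) => by simp [hr])
        (hl.X_pow_mem_span j h)
  · rw [hcancel, smul_zero, zero_add]
    exact hl.natDegree_sumSq_le.trans (by omega)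
  · rw [hcancel, smul_zero, zero_add]
    exact hl.coeff_zero_sumSq_ne_zero

lemma admissible_four (hab : 1 + a ^ 2 + b ^ 2 = 0) (hb : b ≠ 0) (h2 : (2 : F) ≠ 0) :
    Admissible (quadBlock a b (X ^ 4 + 1) 1 (X ^ 3) (X ^ 2)) := by
  rw [← List.append_nil (quadBlock _ _ _ _ _ _)]
  refine admissible_quadBlock_append hab hb h2 [] ?_ (fun j hj => ?_) ?_ ?_
  · simp only [List.mem_cons, forall_eq_or_imp, List.length_nil]
    refine ⟨?_, ?_, ?_, ?_, by simp⟩ <;> compute_degree!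
  · simp only [List.length_nil, zero_add] at hj
    interval_cases j
    · simpa using subset_span (by simp)
    · simpa using subset_span (by simp)
    · exact subset_span (by simp)
    · exact subset_span (by simp)
    · rw [← add_sub_cancel_right (X ^ 4) 1]
      exact sub_mem (subset_span (by simp)) (subset_span (by simp))
  · simp only [sumSq_nil, add_zero, smul_eq_C_mul]
    compute_degree!
  · simpa [coeff_X_pow] using neg_four_mul_sq_ne_zero hb h2

lemma admissible_five (hab : 1 + a ^ 2 + b ^ 2 = 0) (hb : b ≠ 0) (h2 : (2 : F) ≠ 0) :
    Admissible (quadBlock a b (X ^ 5 + 1) 1 (X ^ 4) (X ^ 2) ++ [X ^ 3]) := by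
  refine admissible_quadBlock_append hab hb h2 _ ?_ (fun j hj => ?_) ?_ ?_
  · simp only [List.mem_cons, forall_eq_or_imp, List.length_singleton]
    refine ⟨?_, ?_, ?_, ?_, ?_, by simp⟩ <;> compute_degree!
  · simp only [List.length_singleton] at hj
    interval_cases j
    · simpa using subset_span (by simp)
    · simpa using subset_span (by simp)
    iterate 3 exact subset_span (by simp)
    · rw [← add_sub_cancel_right (X ^ 5) 1]
      exact sub_mem (subset_span (by simp)) (subset_span (by simp))
  · simp only [sumSq_cons, sumSq_nil, add_zero, smul_eq_C_mul]
    compute_degree!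
  · simpa [coeff_X_pow, ← pow_mul] using neg_four_mul_sq_ne_zero hb h2

lemma admissible_six (hab : 1 + a ^ 2 + b ^ 2 = 0) (hb : b ≠ 0) (h2 : (2 : F) ≠ 0) :
    Admissible (quadBlock a b (X ^ 6) (X ^ 3) (X ^ 5) (-X ^ 4) ++ [1, X ^ 2]) := by
  have hcancel : (X ^ 6 * X ^ 3 + X ^ 5 * -X ^ 4 : F[X]) = 0 := by ring
  refine admissible_quadBlock_append hab hb h2 _ ?_ (fun j hj => ?_) ?_ ?_
  · simp only [List.mem_cons, forall_eq_or_imp, List.length_cons, List.length_nil]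
    refine ⟨?_, ?_, ?_, ?_, ?_, ?_, by simp⟩ <;> compute_degree!
  · simp only [List.length_cons, List.length_nil] at hj
    interval_cases j
    · simpa using subset_span (by simp)
    · simpa using subset_span (by simp)
    iterate 2 exact subset_span (by simp)
    · rw [← neg_neg (X ^ 4)]
      exact neg_mem (subset_span (by simp))
    iterate 2 exact subset_span (by simp)
  · simp only [hcancel, smul_zero, zero_add, sumSq_cons, sumSq_nil, add_zero]
    compute_degree!
  · simp [coeff_X_pow, ← pow_mul]

lemma admissible_three (hab : 1 + a ^ 2 + b ^ 2 = 0) (hb : b ≠ 0) :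
    Admissible ([X ^ 3 + a • X ^ 2, a • X ^ 3 - X ^ 2, b • X ^ 3 + 1] : List F[X]) := by
  have hb2 : -b ^ 2 ≠ 0 := neg_ne_zero.mpr (pow_ne_zero 2 hb)
  set S := span F (insert X
    {r | r ∈ ([X ^ 3 + a • X ^ 2, a • X ^ 3 - X ^ 2, b • X ^ 3 + 1] : List F[X])})
  have h1 : X ^ 3 + a • X ^ 2 ∈ S := subset_span (by simp)
  have h2 : a • X ^ 3 - X ^ 2 ∈ S := subset_span (by simp)
  have h3 : b • X ^ 3 + 1 ∈ S := subset_span (by simp)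
  have hX3 : X ^ 3 ∈ S := by
    refine (smul_mem_iff S hb2).mp ?_
    have e : X ^ 3 + a • X ^ 2 + a • (a • X ^ 3 - X ^ 2) = (-b ^ 2) • (X ^ 3 : F[X]) := by
      linear_combination (norm := module) hab • (X ^ 3 : F[X])
    exact e ▸ add_mem h1 (smul_mem _ a h2)
  have hX2 : X ^ 2 ∈ S := by
    refine (smul_mem_iff S hb2).mp ?_
    have e : a • (X ^ 3 + a • X ^ 2) - (a • X ^ 3 - X ^ 2) = (-b ^ 2) • (X ^ 2 : F[X]) := by
      linear_combination (norm := module) hab • (X ^ 2 : F[X])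
    exact e ▸ sub_mem (smul_mem _ a h1) h2
  have hsum : sumSq ([X ^ 3 + a • X ^ 2, a • X ^ 3 - X ^ 2, b • X ^ 3 + 1] : List F[X]) =
      C (-b ^ 2) * X ^ 4 + C (2 * b) * X ^ 3 + 1 := by
    simp only [sumSq_cons, sumSq_nil, smul_eq_C_mul]
    linear_combination (norm := skip) (X ^ 6 + X ^ 4) * congrArg C hab
    simp only [map_add, map_pow, map_one, map_zero, map_mul, map_neg, map_ofNat]
    ring
  refine ⟨?_, fun j hj => ?_, ?_, ?_⟩
  · simp only [List.mem_cons, forall_eq_or_imp, List.length_cons, List.length_nil,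
      smul_eq_C_mul]
    refine ⟨?_, ?_, ?_, by simp⟩ <;> compute_degree!
  · simp only [List.length_cons, List.length_nil] at hj
    interval_cases j
    · rw [show (X : F[X]) ^ 0 = b • X ^ 3 + 1 - b • X ^ 3 by
        rw [add_sub_cancel_left, pow_zero]]
      exact sub_mem h3 (smul_mem _ b hX3)
    · simpa using subset_span (by simp)
    · exact hX2
    · exact hX3
  · rw [hsum]
    compute_degree!
  · simp [hsum, coeff_X_pow]

lemma exists_admissible_of_three_le (hab : 1 + a ^ 2 + b ^ 2 = 0) (hb : b ≠ 0)
    (h2 : (2 : F) ≠ 0) {d : ℕ} (hd : 3 ≤ d) : ∃ l : List F[X], l.length = d ∧ Admissible l := by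
  induction d using Nat.strong_induction_on with
  | _ d ih =>
    obtain rfl | rfl | rfl | rfl | hd7 : d = 3 ∨ d = 4 ∨ d = 5 ∨ d = 6 ∨ 7 ≤ d := by omega
    · exact ⟨_, rfl, admissible_three hab hb⟩
    · exact ⟨_, rfl, admissible_four hab hb h2⟩
    · exact ⟨_, rfl, admissible_five hab hb h2⟩
    · exact ⟨_, rfl, admissible_six hab hb h2⟩
    · obtain ⟨l, hlen, hl⟩ := ih (d - 4) (by omega) (by omega)
      exact ⟨_, by simp [quadBlock]; omega, hl.quadBlock_append hab hb h2⟩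

end OddChar

lemma admissible_two {i : F} (hi : i ^ 2 = -1) :
    Admissible ([X ^ 2, i • X ^ 2 + 1] : List F[X]) := by
  have hsum : sumSq ([X ^ 2, i • X ^ 2 + 1] : List F[X]) = C (2 * i) * X ^ 2 + 1 := by
    simp only [sumSq_cons, sumSq_nil, smul_eq_C_mul]
    linear_combination (norm := skip) X ^ 4 * congrArg C hi
    simp only [map_pow, map_one, map_mul, map_neg, map_ofNat]
    ring
  refine ⟨?_, fun j hj => ?_, ?_, ?_⟩
  · simp only [List.mem_cons, forall_eq_or_imp, List.length_cons, List.length_nil,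
      smul_eq_C_mul]
    refine ⟨?_, ?_, by simp⟩ <;> compute_degree!
  · simp only [List.length_cons, List.length_nil] at hj
    interval_cases j
    · rw [show (X : F[X]) ^ 0 = i • X ^ 2 + 1 - i • X ^ 2 by
        rw [add_sub_cancel_left, pow_zero]]
      exact sub_mem (subset_span (by simp)) (smul_mem _ i (subset_span (by simp)))
    · simpa using subset_span (by simp)
    · exact subset_span (by simp)
  · rw [hsum]
    compute_degree!
  · simp [hsum, coeff_X_pow]

section CharTwo

variable [CharP F 2]

lemma admissible_charTwo (m : ℕ) :
    Admissible ((1 + ((List.range m).map fun k => X ^ (k + 2) : List F[X]).sum) ::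
      (List.range m).map fun k => X ^ (k + 2)) := by
  set t : List F[X] := (List.range m).map fun k => X ^ (k + 2)
  have ht : ∀ r ∈ t, ∃ k < m, r = X ^ (k + 2) := by simp [t, eq_comm]
  have hlen : ((1 + t.sum) :: t).length = m + 1 := by simp [t]
  have hsum : sumSq ((1 + t.sum) :: t) = 1 := by
    rw [sumSq, ← CharTwo.list_sum_sq, List.sum_cons, add_assoc, CharTwo.add_self_eq_zero,
      add_zero, one_pow]
  refine ⟨fun r hr => ?_, fun j hj => ?_, ?_, ?_⟩
  · have ht' : ∀ r ∈ t, r ∈ degreeLE F ↑(m + 1) := fun r hr => by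
      obtain ⟨k, hk, rfl⟩ := ht r hr
      exact mem_degreeLE.mpr ((degree_X_pow_le _).trans
        (by exact_mod_cast (by omega : k + 2 ≤ m + 1)))
    rw [hlen, natDegree_le_iff_degree_le, ← mem_degreeLE]
    rcases List.mem_cons.mp hr with rfl | hr
    · exact add_mem (mem_degreeLE.mpr (degree_one_le.trans (by exact_mod_cast Nat.zero_le _)))
        (list_sum_mem ht')
    · exact ht' r hr
  · rw [hlen] at hj
    set S := span F (insert X {r | r ∈ (1 + t.sum) :: t})
    have hmem : ∀ r ∈ (1 + t.sum) :: t, r ∈ S := fun r hr =>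
      subset_span (Set.mem_insert_of_mem _ hr)
    rcases j with _ | _ | k
    · rw [pow_zero, ← add_sub_cancel_right 1 t.sum]
      exact sub_mem (hmem _ List.mem_cons_self)
        (list_sum_mem fun r hr => hmem r (List.mem_cons_of_mem _ hr))
    · simpa using subset_span (Set.mem_insert X _)
    · exact hmem _ (List.mem_cons_of_mem _ (by simpa [t] using ⟨k, by omega, rfl⟩))
  · simp [hsum]
  · simp [hsum]

end CharTwo

end QGeneric

lemma FiniteField.exists_one_add_sq_add_sq_eq_zero (F : Type*) [Field F] [Fintype F] :
    ∃ a b : F, 1 + a ^ 2 + b ^ 2 = 0 ∧ b ≠ 0 := by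
  have : NeZero (ringChar F) := ⟨CharP.char_ne_zero_of_finite F (ringChar F)⟩
  obtain ⟨a, b, hab⟩ := CharP.sq_add_sq F (ringChar F) (-1)
  have hab' : 1 + (a : F) ^ 2 + (b : F) ^ 2 = 0 := by
    push_cast at hab
    linear_combination hab
  by_cases hb : (b : F) = 0
  · refine ⟨b, a, by linear_combination hab', fun ha => ?_⟩
    simp [ha, hb] at hab'
  · exact ⟨a, b, hab', hb⟩

theorem stmt_5_general (F : Type*) [Field F] [Fintype F] (d : ℕ) (hd : 2 ≤ d)
    (h4 : d = 2 → Fintype.card F % 4 ≠ 3) :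
    ∃ C₀ : Set (Fin d → F), C₀.ncard = Fintype.card F + 1 - d ∧
      QGeneric (∑ i : Fin d, (MvPolynomial.X i : MvPolynomial (Fin d) F) ^ 2) C₀ := by
  obtain ⟨l, rfl, hl⟩ : ∃ l : List F[X], l.length = d ∧ QGeneric.Admissible l := by
    rcases eq_or_ne (ringChar F) 2 with hF | hF
    · have : CharP F 2 := hF ▸ ringChar.charP F
      obtain ⟨m, rfl⟩ : ∃ m, d = m + 1 := ⟨d - 1, by omega⟩
      exact ⟨_, by simp, QGeneric.admissible_charTwo m⟩
    · rcases hd.eq_or_lt with rfl | hd3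
      · obtain ⟨i, hi⟩ := FiniteField.isSquare_neg_one_iff.mpr (h4 rfl)
        exact ⟨_, rfl, QGeneric.admissible_two (by rw [sq, ← hi])⟩
      · obtain ⟨a, b, hab, hb⟩ := FiniteField.exists_one_add_sq_add_sq_eq_zero F
        exact QGeneric.exists_admissible_of_three_le hab hb (Ring.two_ne_zero hF) hd3
  exact hl.exists_qGeneric hd

/-- Let `F` be a finite field and `2 ≤ d ≤ |F| + 1`; if `d = 2`, assume
further `|F| ≢ 3 (mod 4)`. Then there is `C₀ ⊆ F^d` with `|C₀| = |F| + 1 - d` that is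
`Q`-generic for `Q = X₁² + ⋯ + X_d²` (so every affine hyperplane contains at most `d`
points of `C₀` and every hypersphere at most `d+1` points of `C₀`). -/
theorem stmt_5 (F : Type*) [Field F] [Fintype F] (d : ℕ) (hd : 2 ≤ d)
    (hdF : d ≤ Fintype.card F + 1)
    (h4 : d = 2 → Fintype.card F % 4 ≠ 3) :
    ∃ C₀ : Set (Fin d → F), C₀.ncard = Fintype.card F + 1 - d ∧
      QGeneric (∑ i : Fin d, (MvPolynomial.X i : MvPolynomial (Fin d) F) ^ 2) C₀ :=
  stmt_5_general F d hd h4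
end

section
/- Let F be a field, let d ≥ 2 be an integer, and assume that if F is finite then d ≤ |F| + 1. Let Q ∈ F[X₁,…,X_d] be a rich nonzero quadratic form. Then there exists a Q-generic subset C₀ ⊆ F^d whose cardinality satisfies |C₀| + d = |F| + 1 as cardinals; in particular, if F is finite then |C₀| = |F| + 1 − d, and if F is infinite then C₀ is equinumerous with F. -/
open Polynomial

theorem Finsupp.prod_pow_eq_prod_map_toMultiset {σ M : Type*} [CommMonoid M] (s : σ →₀ ℕ)
    (g : σ → M) : (s.prod fun k e => g k ^ e) = (s.toMultiset.map g).prod := by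
  rw [Finsupp.toMultiset_map, Finsupp.prod_toMultiset,
    Finsupp.prod_mapDomain_index (fun _ => pow_zero _) (fun _ _ _ => pow_add _ _ _)]

theorem Finsupp.eq_zero_or_exists_eq_single_of_sum_le_one {σ : Type*} {s : σ →₀ ℕ}
    (hs : (s.sum fun _ e => e) ≤ 1) : s = 0 ∨ ∃ k, s = Finsupp.single k 1 := by
  classical
  have hcard : Multiset.card s.toMultiset ≤ 1 := by rw [Finsupp.card_toMultiset]; exact hs
  rcases Nat.le_one_iff_eq_zero_or_eq_one.mp hcard with h | h
  · exact .inl (Finsupp.toMultiset_eq_iff.mp (Multiset.card_eq_zero.mp h))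
  · obtain ⟨k, hk⟩ := Multiset.card_eq_one.mp h
    exact .inr ⟨k, by simpa using Finsupp.toMultiset_eq_iff.mp hk⟩

namespace MvPolynomial

variable {σ R : Type*} [CommRing R]

theorem polynomial_eval_aeval (N : σ → R[X]) (Q : MvPolynomial σ R) (t : R) :
    (aeval N Q).eval t = eval (fun k => (N k).eval t) Q := by
  rw [← Polynomial.coe_aeval_eq_eval, comp_aeval_apply, ← coe_aeval_eq_eval]
  rfl

variable {f : MvPolynomial σ R}

theorem eval_eq_coeff_zero_add_dotProduct [Fintype σ] (hf : f.totalDegree ≤ 1) (x : σ → R) :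
    eval x f = coeff 0 f + (fun k => coeff (Finsupp.single k 1) f) ⬝ᵥ x := by
  have hsupp : f.support ⊆ insert 0 (Finset.univ.image fun k => Finsupp.single k 1) := by
    intro s hs
    rcases Finsupp.eq_zero_or_exists_eq_single_of_sum_le_one ((le_totalDegree hs).trans hf)
      with rfl | ⟨k, rfl⟩ <;> simp
  conv_lhs => rw [f.as_sum, map_sum]
  rw [Finset.sum_subset hsupp fun s _ hs => by simp [notMem_support_iff.mp hs],
    Finset.sum_insert (by simp [eq_comm]),
    Finset.sum_image fun k _ l _ h => Finsupp.single_left_injective one_ne_zero h]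
  simp [dotProduct, eval_monomial]

theorem exists_coeff_single_ne_zero (hf : f.totalDegree = 1) :
    ∃ k, coeff (Finsupp.single k 1) f ≠ 0 := by
  have hne : f.support.Nonempty :=
    Finset.nonempty_of_ne_empty fun h => by simp [totalDegree, h] at hf
  obtain ⟨s, hs, hmax⟩ := Finset.exists_mem_eq_sup f.support hne fun s => s.sum fun _ e => e
  have hsum : (s.sum fun _ e => e) = 1 := by rw [← hf, totalDegree, hmax]
  rcases Finsupp.eq_zero_or_exists_eq_single_of_sum_le_one hsum.le with rfl | ⟨k, rfl⟩
  · simp at hsum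
  · exact ⟨k, mem_support_iff.mp hs⟩

namespace IsHomogeneous

variable {Q : MvPolynomial σ R} {m : ℕ}

theorem card_toMultiset_eq (hQ : Q.IsHomogeneous m) {s : σ →₀ ℕ} (hs : s ∈ Q.support) :
    Multiset.card s.toMultiset = m := by
  rw [hQ.degree_eq_sum_deg_support hs, Finsupp.card_toMultiset, Finsupp.sum]
  rfl

theorem eval_smul (hQ : Q.IsHomogeneous m) (c : R) (x : σ → R) :
    eval (c • x) Q = c ^ m * eval x Q := by
  conv_lhs => rw [Q.as_sum]
  conv_rhs => rw [Q.as_sum]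
  simp only [map_sum, eval_monomial, Finset.mul_sum, Finsupp.prod_pow_eq_prod_map_toMultiset]
  refine Finset.sum_congr rfl fun s hs => ?_
  rw [← hQ.card_toMultiset_eq hs]
  simp only [Pi.smul_apply, smul_eq_mul, Multiset.prod_map_mul, Multiset.map_const',
    Multiset.prod_replicate]
  ring

variable {n : ℕ} {N : σ → R[X]}

theorem natDegree_aeval_le (hQ : Q.IsHomogeneous m) (hN : ∀ k, (N k).natDegree ≤ n) :
    (MvPolynomial.aeval N Q).natDegree ≤ m * n := by
  conv_lhs => rw [Q.as_sum]
  simp only [map_sum, aeval_monomial, Finsupp.prod_pow_eq_prod_map_toMultiset]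
  refine natDegree_sum_le_of_forall_le _ _ fun s hs => ?_
  rw [Polynomial.algebraMap_eq]
  refine (natDegree_C_mul_le _ _).trans <| (natDegree_multiset_prod_le _).trans ?_
  rw [← hQ.card_toMultiset_eq hs, ← Multiset.card_map N, ← Multiset.card_map natDegree,
    ← smul_eq_mul]
  exact Multiset.sum_le_card_nsmul _ _ (by simpa using fun k _ => hN k)

theorem coeff_aeval (hQ : Q.IsHomogeneous m) (hN : ∀ k, (N k).natDegree ≤ n) :
    (MvPolynomial.aeval N Q).coeff (m * n) = eval (fun k => (N k).coeff n) Q := by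
  conv_lhs => rw [Q.as_sum]
  conv_rhs => rw [Q.as_sum]
  simp only [map_sum, aeval_monomial, eval_monomial, Finsupp.prod_pow_eq_prod_map_toMultiset,
    finsetSum_coeff]
  refine Finset.sum_congr rfl fun s hs => ?_
  rw [← hQ.card_toMultiset_eq hs, Polynomial.algebraMap_eq, Polynomial.coeff_C_mul,
    ← Multiset.card_map N, coeff_multiset_prod_of_natDegree_le]
  · simp [Multiset.map_map]
  · simpa using fun k _ => hN k

end IsHomogeneous

end MvPolynomial

theorem Polynomial.encard_le_natDegree_sub {F : Type*} [Field F] {p : F[X]} (hp : p ≠ 0)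
    {S : Set F} {A : Finset F} (hS : ∀ t ∈ S, p.IsRoot t) (hA : ∀ t ∈ A, p.IsRoot t)
    (hSA : Disjoint S A) : S.encard ≤ (p.natDegree - A.card : ℕ) := by
  classical
  have hsub : S ∪ A ⊆ p.roots.toFinset := by
    rintro t (ht | ht)
    · exact Multiset.mem_toFinset.2 ((mem_roots hp).2 (hS t ht))
    · exact Multiset.mem_toFinset.2 ((mem_roots hp).2 (hA t ht))
  have hcard : S.encard + A.card ≤ p.natDegree := by
    rw [← Set.encard_coe_eq_coe_finsetCard, ← Set.encard_union_eq hSA]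
    refine (Set.encard_le_encard hsub).trans ?_
    rw [Set.encard_coe_eq_coe_finsetCard, Nat.cast_le]
    exact (Multiset.toFinset_card_le p.roots).trans (card_roots' p)
  rw [ENat.natCast_sub]
  exact ENat.le_sub_of_add_le_right (ENat.natCast_ne_top _) hcard

theorem Cardinal.natCast_le_mk_of_forall_finite {α : Type*} {n : ℕ}
    (h : ∀ _ : Finite α, n ≤ Nat.card α) : (n : Cardinal) ≤ Cardinal.mk α := by
  rcases finite_or_infinite α with hα | hα
  · rw [← Nat.cast_card]
    exact_mod_cast h hα
  · exact Cardinal.natCast_lt_aleph0.le.trans (Cardinal.aleph0_le_mk α)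

theorem Cardinal.mk_compl_range_add_natCast {α : Type*} {n : ℕ} {a : Fin n → α}
    (ha : Function.Injective a) : Cardinal.mk ↑(Set.range a)ᶜ + n = Cardinal.mk α := by
  classical
  have hrange : Cardinal.mk (Set.range a) = n := by
    rw [Cardinal.mk_fintype, Set.card_range_of_injective ha, Fintype.card_fin]
  rw [← Cardinal.mk_sum_compl (Set.range a), hrange, add_comm]

section RationalNormalCurve

open Finset Lagrange

variable {F : Type*} [Field F] {n : ℕ} (a : Fin n → F)

/-- The point with coordinates `((t - a₀)⁻¹, …, (t - aₙ₋₁)⁻¹, t)` in the basis `v`. At a node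
`t = a j` the coordinate `(t - a j)⁻¹` is the junk value `0`, so only `t ∉ Set.range a` is
meaningful. -/
def ratNormalCurve {M : Type*} [AddCommGroup M] [Module F M] (v : Fin (n + 1) → M) (t : F) :
    M :=
  ∑ j, (t - a j)⁻¹ • v j.castSucc + t • v (Fin.last n)

theorem LinearMap.map_ratNormalCurve {M N : Type*} [AddCommGroup M] [Module F M]
    [AddCommGroup N] [Module F N] (ℓ : M →ₗ[F] N) (v : Fin (n + 1) → M) (t : F) :
    ℓ (ratNormalCurve a v t) = ratNormalCurve a (ℓ ∘ v) t := by
  simp [ratNormalCurve]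

theorem ratNormalCurve_apply {σ : Type*} (v : Fin (n + 1) → σ → F) (t : F) (k : σ) :
    ratNormalCurve a v t k = ratNormalCurve a (fun i => v i k) t :=
  LinearMap.map_ratNormalCurve a (LinearMap.proj k) v t

theorem ratNormalCurve_injective {M : Type*} [AddCommGroup M] [Module F M]
    {v : Fin (n + 1) → M} (hv : LinearIndependent F v) :
    Function.Injective (ratNormalCurve a v) := by
  intro t t' h
  have hcoords : ∀ s, ratNormalCurve a v s =
      ∑ i, (Fin.snoc (fun j => (s - a j)⁻¹) s : Fin (n + 1) → F) i • v i := by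
    intro s
    simp [ratNormalCurve, Fin.sum_univ_castSucc]
  rw [hcoords, hcoords] at h
  simpa using Fintype.linearIndependent_iffₛ.mp hv _ _ h (Fin.last n)

/-- The numerator of `t ↦ c + ratNormalCurve a w t` over the common denominator
`nodal univ a`. -/
noncomputable def ratNormalCurveNumerator (c : F) (w : Fin (n + 1) → F) : F[X] :=
  C c * nodal univ a + ∑ j, C (w j.castSucc) * nodal (univ.erase j) a +
    C (w (Fin.last n)) * (X * nodal univ a)

variable {a}

theorem eval_ratNormalCurveNumerator {t : F} (ht : t ∉ Set.range a) (c : F)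
    (w : Fin (n + 1) → F) :
    (ratNormalCurveNumerator a c w).eval t =
      (nodal univ a).eval t * (c + ratNormalCurve a w t) := by
  have herase : ∀ j, (nodal (univ.erase j) a).eval t = (nodal univ a).eval t * (t - a j)⁻¹ := by
    intro j
    have hne : t - a j ≠ 0 := sub_ne_zero.mpr fun h => ht ⟨j, h.symm⟩
    rw [nodal_eq_mul_nodal_erase (mem_univ j), eval_mul, eval_sub, eval_X, eval_C,
      mul_comm (t - a j), mul_inv_cancel_right₀ hne]
  simp only [ratNormalCurveNumerator, ratNormalCurve, eval_add, eval_mul, eval_C, eval_X,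
    eval_finsetSum, herase, smul_eq_mul, mul_add, mul_sum]
  ring_nf
  exact congrArg _ (sum_congr rfl fun _ _ => by ring)

theorem eval_ratNormalCurveNumerator_node (c : F) (w : Fin (n + 1) → F) (j : Fin n) :
    (ratNormalCurveNumerator a c w).eval (a j) =
      (nodal (univ.erase j) a).eval (a j) * w j.castSucc := by
  simp only [ratNormalCurveNumerator, eval_add, eval_mul, eval_C, eval_X, eval_finsetSum,
    eval_nodal_at_node (mem_univ j), mul_zero, zero_add, add_zero]
  rw [sum_eq_single j]
  · ring
  · intro i _ hij
    rw [eval_nodal_at_node (mem_erase.mpr ⟨Ne.symm hij, mem_univ j⟩), mul_zero]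
  · simp

theorem natDegree_ratNormalCurveNumerator_le (c : F) (w : Fin (n + 1) → F) :
    (ratNormalCurveNumerator a c w).natDegree ≤ n + 1 := by
  unfold ratNormalCurveNumerator
  refine natDegree_add_le_of_degree_le (natDegree_add_le_of_degree_le ?_ ?_) ?_
  · refine (natDegree_C_mul_le _ _).trans ?_
    simp
  · refine natDegree_sum_le_of_forall_le _ _ fun j _ => (natDegree_C_mul_le _ _).trans ?_
    simp only [natDegree_nodal, card_erase_of_mem (mem_univ j), card_univ, Fintype.card_fin]
    omega
  · refine (natDegree_C_mul_le _ _).trans (natDegree_mul_le.trans ?_)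
    simp [add_comm]

theorem coeff_ratNormalCurveNumerator (c : F) (w : Fin (n + 1) → F) :
    (ratNormalCurveNumerator a c w).coeff (n + 1) = w (Fin.last n) := by
  have hlow : ∀ p : F[X], p.natDegree ≤ n → p.coeff (n + 1) = 0 := fun p hp =>
    coeff_eq_zero_of_natDegree_lt (by omega)
  simp only [ratNormalCurveNumerator, coeff_add, finsetSum_coeff, coeff_C_mul, coeff_X_mul]
  have hmonic : (nodal univ a).coeff n = 1 := by
    simpa using (nodal_monic (s := univ) (v := a)).coeff_natDegree
  rw [hlow _ (by simp), sum_eq_zero fun j _ => by rw [hlow _ (by simp)]; ring, hmonic]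
  ring

theorem ratNormalCurveNumerator_ne_zero (ha : Function.Injective a) (c : F)
    {w : Fin (n + 1) → F} (hw : w ≠ 0) : ratNormalCurveNumerator a c w ≠ 0 := by
  intro h0
  apply hw
  ext i
  induction i using Fin.lastCases with
  | last => simpa [h0] using (coeff_ratNormalCurveNumerator (a := a) c w).symm
  | cast j =>
    have hnode := eval_ratNormalCurveNumerator_node (a := a) c w j
    rw [h0, eval_zero, eq_comm, mul_eq_zero] at hnode
    refine hnode.resolve_left (eval_nodal_not_at_node fun i hi => ?_)
    exact fun h => (mem_erase.mp hi).1 (ha h).symm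

variable {σ : Type*}

theorem eval_ratNormalCurveNumerator_apply {t : F} (ht : t ∉ Set.range a)
    (v : Fin (n + 1) → σ → F) :
    (fun k => (ratNormalCurveNumerator a 0 fun i => v i k).eval t) =
      (nodal univ a).eval t • ratNormalCurve a v t := by
  ext k
  rw [eval_ratNormalCurveNumerator ht, zero_add, Pi.smul_apply, smul_eq_mul, ratNormalCurve_apply]

theorem eval_ratNormalCurveNumerator_apply_node (v : Fin (n + 1) → σ → F) (j : Fin n) :
    (fun k => (ratNormalCurveNumerator a 0 fun i => v i k).eval (a j)) =
      (nodal (univ.erase j) a).eval (a j) • v j.castSucc := by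
  ext k
  rw [eval_ratNormalCurveNumerator_node, Pi.smul_apply, smul_eq_mul]

theorem encard_sep_ratNormalCurve_image_le {M : Type*} [AddCommGroup M] [Module F M]
    {v : Fin (n + 1) → M} (hv : LinearIndependent F v) {P : M → Prop} {p : F[X]}
    (hp : p ≠ 0) {A : Finset F} (hA : ∀ t ∈ A, p.IsRoot t) (hAa : ↑A ⊆ Set.range a)
    (hP : ∀ t ∉ Set.range a, P (ratNormalCurve a v t) → p.IsRoot t) :
    {x ∈ ratNormalCurve a v '' (Set.range a)ᶜ | P x}.encard ≤ (p.natDegree - A.card : ℕ) := by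
  have himage : {x ∈ ratNormalCurve a v '' (Set.range a)ᶜ | P x} =
      ratNormalCurve a v '' {t ∈ (Set.range a)ᶜ | P (ratNormalCurve a v t)} := by
    ext x
    constructor
    · rintro ⟨⟨t, ht, rfl⟩, hx⟩
      exact ⟨t, ⟨ht, hx⟩, rfl⟩
    · rintro ⟨t, ⟨ht, hx⟩, rfl⟩
      exact ⟨⟨t, ht, rfl⟩, hx⟩
  rw [himage, (ratNormalCurve_injective a hv).encard_image]
  exact encard_le_natDegree_sub hp (fun t ht => hP t ht.1 ht.2) hA
    (Set.disjoint_of_subset_right hAa (Set.disjoint_left.mpr fun t ht => ht.1))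

open MvPolynomial

variable [Fintype σ] {v : Fin (n + 1) → σ → F}

theorem encard_ratNormalCurve_image_inter_hyperplane_le (ha : Function.Injective a)
    (hv : LinearIndependent F v) (hspan : Submodule.span F (Set.range v) = ⊤)
    {f : MvPolynomial σ F} (hf : f.totalDegree = 1) :
    {x ∈ ratNormalCurve a v '' (Set.range a)ᶜ | eval x f = 0}.encard ≤ n + 1 := by
  classical
  set ℓ := dotProductEquiv F σ fun k => coeff (Finsupp.single k 1) f
  have hw : ℓ ∘ v ≠ 0 := by
    intro h
    obtain ⟨k, hk⟩ := exists_coeff_single_ne_zero hf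
    have hℓ : ℓ = 0 := LinearMap.ext_on_range hspan fun i => congrFun h i
    exact hk (congrFun ((dotProductEquiv F σ).map_eq_zero_iff.mp hℓ) k)
  refine (encard_sep_ratNormalCurve_image_le hv
    (ratNormalCurveNumerator_ne_zero ha (coeff 0 f) hw) (A := ∅) (by simp) (by simp)
    fun t ht hft => ?_).trans ?_
  · rw [eval_eq_coeff_zero_add_dotProduct hf.le] at hft
    rw [IsRoot, eval_ratNormalCurveNumerator ht, ← LinearMap.map_ratNormalCurve]
    exact mul_eq_zero_of_right _ hft
  · exact_mod_cast natDegree_ratNormalCurveNumerator_le _ _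

theorem exists_polynomial_eq_quadric_along_ratNormalCurve {Q : MvPolynomial σ F}
    (hQ : Q.IsHomogeneous 2) (hQv : ∀ j : Fin n, eval (v j.castSucc) Q = 0)
    (hQlast : eval (v (Fin.last n)) Q ≠ 0) {f : MvPolynomial σ F} (hf : f.totalDegree ≤ 1) :
    ∃ p : F[X], p ≠ 0 ∧ p.natDegree ≤ 2 * (n + 1) ∧ (∀ j, p.IsRoot (a j)) ∧
      ∀ t ∉ Set.range a,
        p.eval t = (nodal univ a).eval t ^ 2 * eval (ratNormalCurve a v t) (Q + f) := by
  classical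
  set π := nodal univ a
  set N : σ → F[X] := fun k => ratNormalCurveNumerator a 0 fun i => v i k
  set ℓ := dotProductEquiv F σ fun k => coeff (Finsupp.single k 1) f
  set q := ratNormalCurveNumerator a (coeff 0 f) (ℓ ∘ v)
  set p := aeval N Q + π * q
  have hNdeg : ∀ k, (N k).natDegree ≤ n + 1 := fun k => natDegree_ratNormalCurveNumerator_le _ _
  have hqdeg : q.natDegree ≤ n + 1 := natDegree_ratNormalCurveNumerator_le _ _
  have hπdeg : π.natDegree = n := by simp [π]
  have hpcoeff : p.coeff (2 * (n + 1)) = eval (v (Fin.last n)) Q := by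
    have hπq : (π * q).natDegree < 2 * (n + 1) := natDegree_mul_le.trans_lt (by omega)
    have hNcoeff : (fun k => (N k).coeff (n + 1)) = v (Fin.last n) :=
      funext fun k => coeff_ratNormalCurveNumerator _ _
    rw [Polynomial.coeff_add, coeff_eq_zero_of_natDegree_lt hπq, add_zero,
      hQ.coeff_aeval hNdeg, hNcoeff]
  refine ⟨p, fun h => hQlast (by rw [← hpcoeff, h, Polynomial.coeff_zero]),
    natDegree_add_le_of_degree_le (hQ.natDegree_aeval_le hNdeg) (natDegree_mul_le.trans (by omega)),
    fun j => ?_, fun t ht => ?_⟩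
  · rw [IsRoot, Polynomial.eval_add, Polynomial.eval_mul, polynomial_eval_aeval,
      eval_ratNormalCurveNumerator_apply_node, hQ.eval_smul, hQv,
      eval_nodal_at_node (mem_univ j)]
    ring
  · rw [Polynomial.eval_add, Polynomial.eval_mul, polynomial_eval_aeval,
      eval_ratNormalCurveNumerator_apply ht, hQ.eval_smul, eval_ratNormalCurveNumerator ht,
      ← LinearMap.map_ratNormalCurve, map_add, eval_eq_coeff_zero_add_dotProduct hf]
    simp only [ℓ, dotProductEquiv_apply_apply]
    ring

theorem encard_ratNormalCurve_image_inter_quadric_le (ha : Function.Injective a)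
    (hv : LinearIndependent F v) {Q : MvPolynomial σ F} (hQ : Q.IsHomogeneous 2)
    (hQv : ∀ j : Fin n, eval (v j.castSucc) Q = 0) (hQlast : eval (v (Fin.last n)) Q ≠ 0)
    {f : MvPolynomial σ F} (hf : f.totalDegree ≤ 1) :
    {x ∈ ratNormalCurve a v '' (Set.range a)ᶜ | eval x (Q + f) = 0}.encard ≤ n + 2 := by
  classical
  obtain ⟨p, hp, hpdeg, hpnode, hpeval⟩ :=
    exists_polynomial_eq_quadric_along_ratNormalCurve (a := a) hQ hQv hQlast hf
  refine (encard_sep_ratNormalCurve_image_le hv hp (A := univ.image a)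
    (by simpa using hpnode) (by simp) fun t ht hft => ?_).trans ?_
  · rw [IsRoot, hpeval t ht, hft, mul_zero]
  · rw [card_image_of_injective _ ha, card_univ, Fintype.card_fin]
    exact_mod_cast (by omega : p.natDegree - n ≤ n + 2)

theorem qGeneric_ratNormalCurve_image (ha : Function.Injective a)
    {v : Fin (n + 1) → Fin (n + 1) → F} (hv : LinearIndependent F v)
    (hspan : Submodule.span F (Set.range v) = ⊤) {Q : MvPolynomial (Fin (n + 1)) F}
    (hQ : Q.IsHomogeneous 2) (hQv : ∀ j : Fin n, eval (v j.castSucc) Q = 0)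
    (hQlast : eval (v (Fin.last n)) Q ≠ 0) :
    QGeneric Q (ratNormalCurve a v '' (Set.range a)ᶜ) := by
  refine ⟨fun f hf => ?_, fun f hf => ?_⟩
  · exact_mod_cast encard_ratNormalCurve_image_inter_hyperplane_le ha hv hspan hf
  · exact (encard_ratNormalCurve_image_inter_quadric_le ha hv hQ hQv hQlast hf).trans_eq
      (by push_cast; ring)

end RationalNormalCurve

/-- Let `F` be a field, `d ≥ 2`, and if `F` is finite then `d ≤ |F| + 1`.
Let `Q` be a rich nonzero quadratic form (there is a basis `v₁,…,v_d` of `F^d` with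
`Q(v₁) = ⋯ = Q(v_{d-1}) = 0 ≠ Q(v_d)`). Then there is a `Q`-generic subset `C₀ ⊆ F^d`
with `|C₀| + d = |F| + 1` as cardinals. -/
theorem stmt_6 (F : Type*) [Field F] (d : ℕ) (hd : 2 ≤ d)
    (hcard : ∀ _ : Finite F, d ≤ Nat.card F + 1)
    (Q : MvPolynomial (Fin d) F) (hQ : Q.IsHomogeneous 2)
    (hrich : ∃ v : Fin d → (Fin d → F),
      LinearIndependent F v ∧ Submodule.span F (Set.range v) = ⊤ ∧
      (∀ i : Fin d, (i : ℕ) < d - 1 → MvPolynomial.eval (v i) Q = 0) ∧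
      MvPolynomial.eval (v ⟨d - 1, by omega⟩) Q ≠ 0) :
    ∃ C₀ : Set (Fin d → F), QGeneric Q C₀ ∧
      Cardinal.mk C₀ + (d : Cardinal) = Cardinal.mk F + 1 := by
  obtain ⟨v, hv, hspan, hQv, hQlast⟩ := hrich
  obtain ⟨n, rfl⟩ : ∃ n, d = n + 1 := ⟨d - 1, by omega⟩
  have hn : (n : Cardinal) ≤ Cardinal.mk F :=
    Cardinal.natCast_le_mk_of_forall_finite fun hF => by have := hcard hF; omega
  obtain ⟨a⟩ : Nonempty (Fin n ↪ F) := Cardinal.lift_mk_le'.mp (by simpa using hn)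
  refine ⟨ratNormalCurve a v '' (Set.range a)ᶜ, qGeneric_ratNormalCurve_image a.injective hv
    hspan hQ (fun j => hQv j.castSucc (by simp)) hQlast, ?_⟩
  rw [Cardinal.mk_image_eq (ratNormalCurve_injective a hv),
    ← Cardinal.mk_compl_range_add_natCast a.injective]
  push_cast
  ring
end

section
/- Let F be a finite field, d ≥ 2, and let Q ∈ F[X₁,…,X_d] be a homogeneous polynomial of degree at most 2 (possibly zero). Then the number of points x ∈ F^d with Q(x) = 0 is at least |F|^{d−2}. -/
/-!
Over a finite field with `q` elements, a quadratic form `Q` on a space `V` of dimension `n ≥ 3`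
has a nonzero zero `v`, by Chevalley–Warning. Choose a hyperplane `W` not containing `v`, so that
`V = W ⊕ F v` and `Q (w + t v) = Q w + t · polar Q w v`. If `polar Q · v` vanishes on `W`, every
zero of `Q` on `W` gives `q` zeros of `Q`, and induction on `n` applies. Otherwise, for each `w`
in the affine hyperplane `{w ∈ W | polar Q w v = 1}` of `W`, which has `q ^ (n - 2)` points,
exactly one point of the line `w + F v` is a zero of `Q`. Finally, a homogeneous quadratic
polynomial in `d` variables evaluates to a quadratic form on `F ^ d`.
-/

open Module MvPolynomial

namespace MvPolynomial

variable {σ R : Type*} [CommRing R]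

theorem IsHomogeneous.exists_linearMap_eval_eq {P : MvPolynomial σ R} (hP : P.IsHomogeneous 1) :
    ∃ f : (σ → R) →ₗ[R] R, ∀ x, f x = eval x P := by
  rw [← mem_homogeneousSubmodule, homogeneousSubmodule_one_eq_span_X] at hP
  induction hP using Submodule.span_induction with
  | mem _ h =>
    obtain ⟨i, rfl⟩ := h
    exact ⟨LinearMap.proj i, by simp⟩
  | zero => exact ⟨0, by simp⟩
  | add _ _ _ _ hP hP' =>
    obtain ⟨f, hf⟩ := hP
    obtain ⟨f', hf'⟩ := hP'
    exact ⟨f + f', by simp [hf, hf']⟩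
  | smul a _ _ hP =>
    obtain ⟨f, hf⟩ := hP
    exact ⟨a • f, by simp [hf]⟩

theorem IsHomogeneous.exists_quadraticMap_eval_eq {P : MvPolynomial σ R}
    (hP : P.IsHomogeneous 2) : ∃ Q : QuadraticMap R (σ → R) R, ∀ x, Q x = eval x P := by
  rw [← mem_homogeneousSubmodule, ← homogeneousSubmodule_one_pow, pow_two] at hP
  induction hP using Submodule.mul_induction_on' with
  | mem_mul_mem P hP P' hP' =>
    obtain ⟨f, hf⟩ := exists_linearMap_eval_eq hP
    obtain ⟨f', hf'⟩ := exists_linearMap_eval_eq hP'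
    exact ⟨QuadraticMap.linMulLin f f', by simp [hf, hf']⟩
  | add _ _ _ _ hP hP' =>
    obtain ⟨Q, hQ⟩ := hP
    obtain ⟨Q', hQ'⟩ := hP'
    exact ⟨Q + Q', by simp [hQ, hQ']⟩

theorem exists_ne_zero_eval_eq_zero {K : Type*} [Field K] [Fintype K] [Fintype σ]
    {P : MvPolynomial σ K} (h0 : eval 0 P = 0) (hP : P.totalDegree < Fintype.card σ) :
    ∃ x ≠ 0, eval x P = 0 := by
  classical
  obtain ⟨p, _⟩ := CharP.exists K
  have hdvd := char_dvd_card_solutions p hP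
  have hpos : 0 < Fintype.card { x : σ → K // eval x P = 0 } :=
    Fintype.card_pos_iff.mpr ⟨⟨0, h0⟩⟩
  obtain ⟨x, hx⟩ := Fintype.exists_ne_of_one_lt_card
    ((CharP.char_is_prime K p).one_lt.trans_le (Nat.le_of_dvd hpos hdvd)) ⟨0, h0⟩
  exact ⟨x, fun h => hx (Subtype.ext h), x.2⟩

end MvPolynomial

namespace QuadraticMap

theorem exists_isHomogeneous_eval_eq {σ R : Type*} [Fintype σ] [CommRing R]
    (Q : QuadraticMap R (σ → R) R) :
    ∃ P : MvPolynomial σ R, P.IsHomogeneous 2 ∧ ∀ x, eval x P = Q x := by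
  classical
  obtain ⟨B, rfl⟩ := LinearMap.BilinMap.toQuadraticMap_surjective Q
  refine ⟨∑ i, ∑ j, C (LinearMap.toMatrix₂' R B i j) * X i * X j, ?_, fun x => ?_⟩
  · exact IsHomogeneous.sum _ _ _ fun i _ => IsHomogeneous.sum _ _ _ fun j _ =>
      (isHomogeneous_C_mul_X _ i).mul (isHomogeneous_X R j)
  · conv_rhs => rw [LinearMap.BilinMap.toQuadraticMap_apply,
      ← Matrix.toLinearMap₂'_toMatrix' (R := R) B, Matrix.toLinearMap₂'_apply]
    simp [smul_eq_mul, mul_comm, mul_left_comm]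

theorem map_add_smul_of_map_eq_zero {R M N : Type*} [CommRing R] [AddCommGroup M] [Module R M]
    [AddCommGroup N] [Module R N] (Q : QuadraticMap R M N) {v : M} (hv : Q v = 0) (x : M) (t : R) :
    Q (x + t • v) = Q x + t • polar Q x v := by
  rw [QuadraticMap.map_add (⇑Q), QuadraticMap.map_smul, hv, smul_zero, add_zero, polar_smul_right]

theorem one_le_ncard_setOf_eq_zero {R M N : Type*} [CommSemiring R] [AddCommMonoid M] [Module R M]
    [AddCommMonoid N] [Module R N] [Finite M] (Q : QuadraticMap R M N) :
    1 ≤ {x | Q x = 0}.ncard :=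
  (Set.ncard_pos).2 ⟨0, Q.map_zero⟩

end QuadraticMap

section Field

variable {F V : Type*} [Field F] [AddCommGroup V] [Module F V]

theorem Submodule.add_smul_eq_add_smul_iff {W : Submodule F V} {v : V} (hv : v ∉ W) {w w' : W}
    {t t' : F} : (w : V) + t • v = w' + t' • v ↔ w = w' ∧ t = t' := by
  refine ⟨fun h => ?_, by rintro ⟨rfl, rfl⟩; rfl⟩
  obtain rfl : t = t' := by
    by_contra hne
    have hv' : v = (t - t')⁻¹ • ((w' : V) - w) := by
      rw [eq_inv_smul_iff₀ (sub_ne_zero.2 hne)]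
      linear_combination (norm := module) h
    exact hv (hv' ▸ W.smul_mem _ (W.sub_mem w'.2 w.2))
  simpa using h

variable [FiniteDimensional F V]

variable (F) in
theorem exists_submodule_finrank_add_one_eq_and_notMem {v : V} (hv : v ≠ 0) :
    ∃ W : Submodule F V, finrank F W + 1 = finrank F V ∧ v ∉ W := by
  obtain ⟨f, hf⟩ := Projective.exists_dual_eq_one F hv
  exact ⟨LinearMap.ker f, Dual.finrank_ker_add_one_of_ne_zero (by rintro rfl; simp at hf),
    by simp [hf]⟩

namespace QuadraticMap

variable [Finite F]

theorem not_anisotropic_of_three_le_finrank (Q : QuadraticForm F V) (h : 3 ≤ finrank F V) :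
    ¬ Q.Anisotropic := by
  have := Fintype.ofFinite F
  let e := (finBasis F V).equivFun.symm
  obtain ⟨P, hP, hPQ⟩ := (Q.comp e.toLinearMap).exists_isHomogeneous_eval_eq
  obtain ⟨x, hx, hPx⟩ := exists_ne_zero_eval_eq_zero (P := P) (by rw [hPQ]; simp)
    (by simpa using hP.totalDegree_le.trans_lt h)
  rw [not_anisotropic_iff_exists]
  exact ⟨e x, by simpa using hx, by simpa [hPQ] using hPx⟩

theorem card_pow_le_ncard_of_polar_ne_zero (Q : QuadraticForm F V) {v : V} (hv : Q v = 0)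
    {W : Submodule F V} (hvW : v ∉ W) {w₀ : W} (hw₀ : polar Q w₀ v ≠ 0) :
    Nat.card F ^ (finrank F W - 1) ≤ {x | Q x = 0}.ncard := by
  have := Module.finite_of_finite (M := V) F
  let ℓ : Dual F W := (polarBilin Q).flip v ∘ₗ W.subtype
  have hℓ : ℓ ≠ 0 := fun h => hw₀ (LinearMap.congr_fun h w₀)
  obtain ⟨u, hu⟩ := LinearMap.surjective hℓ 1
  have hzero (y : LinearMap.ker ℓ) : Q ((y + u : W) + (-Q (y + u : W)) • v) = 0 := by
    have hy : polar Q y v = 0 := y.2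
    rw [map_add_smul_of_map_eq_zero Q hv, Submodule.coe_add, polar_add_left, hy, zero_add]
    have hu' : polar Q u v = 1 := hu
    rw [hu', smul_eq_mul, mul_one, add_neg_cancel]
  let g : LinearMap.ker ℓ → {x | Q x = 0} := fun y => ⟨_, hzero y⟩
  have hg : Function.Injective g := fun y y' h =>
    Subtype.ext (add_right_cancel ((Submodule.add_smul_eq_add_smul_iff hvW).1
      (congrArg Subtype.val h)).1)
  calc Nat.card F ^ (finrank F W - 1) = Nat.card (LinearMap.ker ℓ) := by
        rw [natCard_eq_pow_finrank (K := F) (V := LinearMap.ker ℓ),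
          ← Dual.finrank_ker_add_one_of_ne_zero hℓ, Nat.add_sub_cancel]
    _ ≤ _ := Nat.card_le_card_of_injective g hg

theorem mul_ncard_le_ncard_of_polar_eq_zero (Q : QuadraticForm F V) {v : V} (hv : Q v = 0)
    {W : Submodule F V} (hvW : v ∉ W) (hW : ∀ w ∈ W, polar Q w v = 0) :
    Nat.card F * {w : W | Q w = 0}.ncard ≤ {x | Q x = 0}.ncard := by
  have := Module.finite_of_finite (M := V) F
  let g : F × {w : W | Q w = 0} → {x | Q x = 0} := fun p =>
    ⟨(p.2 : V) + p.1 • v, by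
      show Q _ = 0
      rw [map_add_smul_of_map_eq_zero Q hv, hW _ p.2.1.2, smul_zero, add_zero]
      exact p.2.2⟩
  have hg : Function.Injective g := by
    rintro ⟨t, w⟩ ⟨t', w'⟩ h
    obtain ⟨hw, rfl⟩ := (Submodule.add_smul_eq_add_smul_iff hvW).1 (congrArg Subtype.val h)
    exact Prod.ext rfl (Subtype.ext hw)
  rw [← Nat.card_coe_set_eq, ← Nat.card_coe_set_eq, ← Nat.card_prod]
  exact Nat.card_le_card_of_injective g hg

theorem pow_finrank_sub_two_le_ncard_setOf_eq_zero (Q : QuadraticForm F V) :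
    Nat.card F ^ (finrank F V - 2) ≤ {x | Q x = 0}.ncard := by
  obtain ⟨n, hn⟩ : ∃ n, finrank F V = n := ⟨_, rfl⟩
  induction n using Nat.strong_induction_on generalizing V with
  | _ n ih =>
    rcases Nat.lt_or_ge n 3 with hn3 | hn3
    · have := Module.finite_of_finite (M := V) F
      simpa [hn, Nat.sub_eq_zero_of_le (Nat.le_of_lt_succ hn3)] using Q.one_le_ncard_setOf_eq_zero
    obtain ⟨v, hv0, hv⟩ := (not_anisotropic_iff_exists Q).1
      (Q.not_anisotropic_of_three_le_finrank (by omega))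
    obtain ⟨W, hW, hvW⟩ := exists_submodule_finrank_add_one_eq_and_notMem F hv0
    by_cases hpolar : ∃ w : W, polar Q w v ≠ 0
    · obtain ⟨w₀, hw₀⟩ := hpolar
      have := Q.card_pow_le_ncard_of_polar_ne_zero hv hvW hw₀
      rwa [show finrank F W - 1 = finrank F V - 2 by omega] at this
    push Not at hpolar
    calc Nat.card F ^ (finrank F V - 2) = Nat.card F * Nat.card F ^ (finrank F W - 2) := by
          rw [← pow_succ']; congr 1; omega
      _ ≤ Nat.card F * {w : W | Q w = 0}.ncard :=
          Nat.mul_le_mul_left _ (ih _ (by omega) (Q.comp W.subtype) rfl)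
      _ ≤ _ := Q.mul_ncard_le_ncard_of_polar_eq_zero hv hvW fun w hw => hpolar ⟨w, hw⟩

end QuadraticMap

end Field

theorem stmt_10_general (F : Type*) [Field F] [Fintype F] (d : ℕ)
    (Q : MvPolynomial (Fin d) F) (hQ : Q.IsHomogeneous 2) :
    Fintype.card F ^ (d - 2) ≤ {x : Fin d → F | MvPolynomial.eval x Q = 0}.ncard := by
  obtain ⟨Q', hQ'⟩ := hQ.exists_quadraticMap_eval_eq
  simpa [hQ', finrank_fin_fun] using Q'.pow_finrank_sub_two_le_ncard_setOf_eq_zero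

/-- Let `F` be a finite field, `d ≥ 2`, and `Q ∈ F[X₁,…,X_d]` a
homogeneous polynomial of degree 2 (possibly zero). Then the number of points
`x ∈ F^d` with `Q(x) = 0` is at least `|F|^{d-2}`. -/
theorem stmt_10 (F : Type*) [Field F] [Fintype F] (d : ℕ) (hd : 2 ≤ d)
    (Q : MvPolynomial (Fin d) F) (hQ : Q.IsHomogeneous 2) :
    Fintype.card F ^ (d - 2) ≤ {x : Fin d → F | MvPolynomial.eval x Q = 0}.ncard :=
  stmt_10_general F d Q hQ
end

section
/- Let F ⊆ K be a field extension, d ≥ 2, and let Q ∈ F[X₁,…,X_d] be a quadratic form. If D ⊆ F^d is Q-generic over F, then the image of D in K^d (under the coordinatewise inclusion F ⊆ K) is Q-generic over K, where Q is regarded as a quadratic form over K via the inclusion. -/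
open MvPolynomial

section
variable {F K : Type*} [Field F] [Field K] [Algebra F K] {d : ℕ}

noncomputable def gmap (φ : K →ₗ[F] F) (f : MvPolynomial (Fin d) K) :
    MvPolynomial (Fin d) F :=
  ∑ m ∈ f.support, monomial m (φ (coeff m f))

lemma coeff_gmap (φ : K →ₗ[F] F) (f : MvPolynomial (Fin d) K) (m : Fin d →₀ ℕ) :
    coeff m (gmap φ f) = φ (coeff m f) := by
  unfold gmap
  rw [coeff_sum]
  simp only [coeff_monomial]
  by_cases h : m ∈ f.support
  · rw [Finset.sum_eq_single m]
    · simp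
    · intro b _ hb; rw [if_neg hb]
    · intro h'; exact absurd h h'
  · rw [Finset.sum_eq_zero]
    · rw [notMem_support_iff.mp h]; simp
    · intro b hb
      have : b ≠ m := fun e => h (e ▸ hb)
      rw [if_neg this]

lemma totalDegree_gmap_le (φ : K →ₗ[F] F) (f : MvPolynomial (Fin d) K) :
    (gmap φ f).totalDegree ≤ f.totalDegree := by
  apply Finset.sup_mono
  intro m hm
  rw [mem_support_iff, coeff_gmap] at hm
  rw [mem_support_iff]
  intro h; rw [h] at hm; simp at hm

lemma eval_gmap (φ : K →ₗ[F] F) (f : MvPolynomial (Fin d) K) (x : Fin d → F) :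
    eval x (gmap φ f) = φ (eval (fun i => algebraMap F K (x i)) f) := by
  rw [eval_eq (fun i => algebraMap F K (x i)) f, map_sum]
  unfold gmap
  rw [map_sum]
  apply Finset.sum_congr rfl
  intro m _
  rw [eval_monomial]
  have : (∏ i ∈ m.support, (algebraMap F K (x i)) ^ m i)
      = algebraMap F K (∏ i ∈ m.support, (x i) ^ m i) := by
    rw [map_prod]; simp
  rw [this]
  have : coeff m f * algebraMap F K (∏ i ∈ m.support, (x i) ^ m i)
      = (∏ i ∈ m.support, (x i) ^ m i) • coeff m f := by
    rw [Algebra.smul_def, mul_comm]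
  rw [this, map_smul, smul_eq_mul, Finsupp.prod]
  ring

lemma algebraMap_eval (x : Fin d → F) (Q : MvPolynomial (Fin d) F) :
    eval (fun i => algebraMap F K (x i)) (MvPolynomial.map (algebraMap F K) Q)
      = algebraMap F K (eval x Q) := by
  rw [eval_map]
  rw [← eval₂_id Q, eval₂_comp_left (algebraMap F K) (RingHom.id F) x Q]
  rfl

end


/-- Let `F ⊆ K` be a field extension, `d ≥ 2`, and `Q ∈ F[X₁,…,X_d]` a
quadratic form. If `D ⊆ F^d` is `Q`-generic over `F`, then the image of `D` in `K^d`
is `Q`-generic over `K` (with `Q` regarded over `K` via the inclusion). -/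
theorem stmt_13 (F K : Type*) [Field F] [Field K] [Algebra F K] (d : ℕ) (hd : 2 ≤ d)
    (Q : MvPolynomial (Fin d) F) (hQ0 : Q ≠ 0) (hQ : Q.IsHomogeneous 2)
    (D : Set (Fin d → F)) (hD : QGeneric Q D) :
    QGeneric (MvPolynomial.map (algebraMap F K) Q)
      ((fun x : Fin d → F => fun j : Fin d => algebraMap F K (x j)) '' D) := by
  set ι : (Fin d → F) → (Fin d → K) := fun x j => algebraMap F K (x j) with hι
  have hinj : Function.Injective ι := by
    intro a b h
    funext j
    exact (algebraMap F K).injective (congrFun h j)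
  have himg : ∀ (p : (Fin d → K) → Prop),
      {y ∈ ι '' D | p y} = ι '' {x ∈ D | p (ι x)} := by
    intro p
    ext y
    constructor
    · rintro ⟨⟨x, hx, rfl⟩, hp⟩
      exact ⟨x, ⟨hx, hp⟩, rfl⟩
    · rintro ⟨x, ⟨hx, hp⟩, rfl⟩
      exact ⟨⟨x, hx, rfl⟩, hp⟩
  constructor
  · intro f hf
    -- find a monomial of degree 1 with nonzero coefficient
    have hf0 : f ≠ 0 := by
      intro h; rw [h] at hf; simp at hf
    have hne : f.support.Nonempty := support_nonempty.mpr hf0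
    obtain ⟨m, hm, hsum⟩ := Finset.exists_mem_eq_sup f.support hne
      (fun s => s.sum fun _ e => e)
    have hc : coeff m f ≠ 0 := mem_support_iff.mp hm
    have hex : ∃ φ : Module.Dual F K, φ (coeff m f) ≠ 0 := by
      by_contra h
      push_neg at h
      exact hc ((Module.forall_dual_apply_eq_zero_iff F (coeff m f)).mp h)
    obtain ⟨φ, hφ⟩ := hex
    set g := gmap φ f with hg
    have hgdeg : g.totalDegree = 1 := by
      apply le_antisymm
      · exact (totalDegree_gmap_le φ f).trans hf.le
      · have hmem : m ∈ g.support := by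
          rw [mem_support_iff, hg, coeff_gmap]; exact hφ
        have := MvPolynomial.le_totalDegree hmem
        calc 1 = f.totalDegree := hf.symm
        _ = m.sum fun _ e => e := hsum
        _ ≤ g.totalDegree := this
    rw [himg]
    rw [(hinj.injOn).encard_image]
    refine le_trans (Set.encard_mono ?_) (hD.1 g hgdeg)
    intro x ⟨hx, hev⟩
    refine ⟨hx, ?_⟩
    rw [hg, eval_gmap]
    have : eval (fun i => algebraMap F K (x i)) f = 0 := hev
    rw [this, map_zero]
  · intro f hf
    obtain ⟨φ, hφ⟩ := LinearMap.exists_leftInverse_of_injective (Algebra.linearMap F K)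
      (by rw [LinearMap.ker_eq_bot]; exact fun a b h => (algebraMap F K).injective h)
    have hφid : ∀ a : F, φ (algebraMap F K a) = a := by
      intro a
      have := congrFun (congrArg (fun (l : F →ₗ[F] F) => l.toFun) hφ) a
      simpa using this
    set g := gmap φ f with hg
    have hgdeg : g.totalDegree ≤ 1 := (totalDegree_gmap_le φ f).trans hf
    rw [himg]
    rw [(hinj.injOn).encard_image]
    refine le_trans (Set.encard_mono ?_) (hD.2 g hgdeg)
    intro x ⟨hx, hev⟩
    refine ⟨hx, ?_⟩
    have hev' : eval (fun i => algebraMap F K (x i))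
        (MvPolynomial.map (algebraMap F K) Q + f) = 0 := hev
    rw [map_add] at hev' ⊢
    rw [hg, eval_gmap]
    have h1 : eval (fun i => algebraMap F K (x i)) (MvPolynomial.map (algebraMap F K) Q)
        = algebraMap F K (eval x Q) := algebraMap_eval x Q
    have h2 : eval (fun i => algebraMap F K (x i)) f
        = - algebraMap F K (eval x Q) := by
      rw [h1] at hev'
      exact eq_neg_of_add_eq_zero_right hev'
    rw [h2, map_neg, hφid]
    ring
end
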